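/- For an interval-decomposable P-module M and any connected subposet I of P, the generalized rank rk_M(I) equals the total multiplicity of intervals J in the barcode of M satisfying J ⊇ I. -/

import Mathlib

open scoped Classical

variable (k : Type) (P : Type) [Field k] [PartialOrder P]

/-- A pointwise (not necessarily finite-dimensional) persistence module over the poset `P`. -/
structure PersMod where
  V : P → Type
  [acg : ∀ p, AddCommGroup (V p)]
  [mod : ∀ p, Module k (V p)]
  φ : ∀ p q : P, p ≤ q → (V p →ₗ[k] V q)
  φ_self : ∀ p : P, φ p p le_rfl = LinearMap.id
  φ_comp : ∀ (p q r : P) (hpq : p ≤ q) (hqr : q ≤ r),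
    (φ q r hqr).comp (φ p q hpq) = φ p r (hpq.trans hqr)

attribute [instance] PersMod.acg PersMod.mod

variable {k P}

namespace PersMod

lemma φ_self_apply (M : PersMod k P) (p : P) (v : M.V p) : M.φ p p le_rfl v = v := by
  rw [M.φ_self]; rfl

lemma φ_comp_apply (M : PersMod k P) (p q r : P) (hpq : p ≤ q) (hqr : q ≤ r) (v : M.V p) :
    M.φ q r hqr (M.φ p q hpq v) = M.φ p r (hpq.trans hqr) v := by
  rw [← M.φ_comp p q r hpq hqr]; rfl

/-- The submodule of sections of `M` over a subset `I ⊆ P`. -/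
def sections (M : PersMod k P) (I : Set P) : Submodule k (∀ p : I, M.V p) where
  carrier := {ℓ | ∀ (p q : I) (h : (p : P) ≤ (q : P)), M.φ p q h (ℓ p) = ℓ q}
  add_mem' := by
    intro a b ha hb p q h
    simp only [Pi.add_apply, map_add, ha p q h, hb p q h]
  zero_mem' := by
    intro p q h
    simp only [Pi.zero_apply, map_zero]
  smul_mem' := by
    intro c a ha p q h
    simp only [Pi.smul_apply, map_smul, ha p q h]

/-- The relations submodule used to present the colimit of `M` over `I`. -/
noncomputable def colimRel (M : PersMod k P) (I : Set P) :
    Submodule k (Π₀ p : I, M.V p) :=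
  Submodule.span k {x | ∃ (p q : I) (h : (p : P) ≤ (q : P)) (v : M.V p),
    x = DFinsupp.lsingle (R := k) p v - DFinsupp.lsingle (R := k) q (M.φ p q h v)}

/-- The canonical limit-to-colimit map of `M` over `I`, based at `p0 ∈ I`. -/
noncomputable def limToColim (M : PersMod k P) (I : Set P) (p0 : P) (hp : p0 ∈ I) :
    (M.sections I) →ₗ[k] (Π₀ p : I, M.V p) ⧸ M.colimRel I :=
  (M.colimRel I).mkQ ∘ₗ (DFinsupp.lsingle (R := k) (⟨p0, hp⟩ : I)) ∘ₗ
    (LinearMap.proj (⟨p0, hp⟩ : I)) ∘ₗ (M.sections I).subtype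

/-- The generalized rank of `M` over `I`, based at `p0 ∈ I`. -/
noncomputable def rkAt (M : PersMod k P) (I : Set P) (p0 : P) (hp : p0 ∈ I) : ℕ :=
  Module.finrank k (LinearMap.range (M.limToColim I p0 hp))

/-- The generalized rank of `M` over `I` (with a choice of basepoint; for a connected
subposet `I` this is independent of the basepoint). -/
noncomputable def rk (M : PersMod k P) (I : Set P) : ℕ :=
  if h : I.Nonempty then M.rkAt I h.choose h.choose_spec else 0

end PersMod

/-- One step of a zigzag inside `I`. -/
def zigStep (I : Set P) (a b : P) : Prop := a ∈ I ∧ b ∈ I ∧ (a ≤ b ∨ b ≤ a)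

/-- `I` is a connected subposet of `P`. -/
def IsConnectedPoset (I : Set P) : Prop :=
  I.Nonempty ∧ ∀ a ∈ I, ∀ b ∈ I, Relation.ReflTransGen (zigStep I) a b

/-- `I` is a convex subset of `P`. -/
def IsConvexPoset (I : Set P) : Prop :=
  ∀ ⦃a b c : P⦄, a ∈ I → c ∈ I → a ≤ b → b ≤ c → b ∈ I

/-- `I` is an interval of `P`: nonempty, convex and connected. -/
def IsIntervalPoset (I : Set P) : Prop := IsConvexPoset I ∧ IsConnectedPoset I

namespace PersMod

/-- Isomorphism of persistence modules. -/
structure Iso (M N : PersMod k P) where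
  e : ∀ p : P, M.V p ≃ₗ[k] N.V p
  comm : ∀ (p q : P) (h : p ≤ q) (v : M.V p), e q (M.φ p q h v) = N.φ p q h (e p v)

/-- Binary direct sum of persistence modules. -/
def dSum (M N : PersMod k P) : PersMod k P where
  V p := M.V p × N.V p
  φ p q h := (M.φ p q h).prodMap (N.φ p q h)
  φ_self p := by
    show (M.φ p p le_rfl).prodMap (N.φ p p le_rfl) = LinearMap.id
    apply LinearMap.ext
    rintro ⟨a, b⟩
    simp [M.φ_self_apply, N.φ_self_apply]
  φ_comp p q r hpq hqr := by
    show ((M.φ q r hqr).prodMap (N.φ q r hqr)).comp ((M.φ p q hpq).prodMap (N.φ p q hpq)) = _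
    apply LinearMap.ext
    rintro ⟨a, b⟩
    simp [M.φ_comp_apply, N.φ_comp_apply]

/-- Direct sum of an arbitrary family of persistence modules. -/
noncomputable def famSum {ι : Type} (Mf : ι → PersMod k P) : PersMod k P where
  V p := Π₀ i, (Mf i).V p
  φ p q h := DFinsupp.mapRange.linearMap (fun i => (Mf i).φ p q h)
  φ_self p := by
    show DFinsupp.mapRange.linearMap (fun i => (Mf i).φ p p le_rfl) = LinearMap.id
    have : (fun i => (Mf i).φ p p le_rfl) = fun i => (LinearMap.id : (Mf i).V p →ₗ[k] (Mf i).V p) := by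
      funext i; exact (Mf i).φ_self p
    rw [this, DFinsupp.mapRange.linearMap_id]
  φ_comp p q r hpq hqr := by
    show (DFinsupp.mapRange.linearMap (fun i => (Mf i).φ q r hqr)).comp
        (DFinsupp.mapRange.linearMap (fun i => (Mf i).φ p q hpq)) =
      DFinsupp.mapRange.linearMap (fun i => (Mf i).φ p r (hpq.trans hqr))
    rw [← DFinsupp.mapRange.linearMap_comp]
    congr 1
    funext i
    exact (Mf i).φ_comp p q r hpq hqr

/-- `M` is a trivial (zero) persistence module. -/
def IsTrivial (M : PersMod k P) : Prop := ∀ p : P, Subsingleton (M.V p)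

/-- `M` is indecomposable. -/
def Indecomposable (M : PersMod k P) : Prop :=
  ¬ M.IsTrivial ∧
    ∀ N₁ N₂ : PersMod k P, Nonempty (Iso M (dSum N₁ N₂)) → N₁.IsTrivial ∨ N₂.IsTrivial

end PersMod

/-- The fibers of the interval module. -/
noncomputable def kSub (I : Set P) (p : P) : Submodule k k := if p ∈ I then ⊤ else ⊥

/-- The interval module `k_I` supported on a convex subset `I`. -/
noncomputable def kMod (I : Set P) (hI : IsConvexPoset I) : PersMod k P where
  V p := ↥(kSub (k := k) I p)
  φ p q _h := LinearMap.codRestrict _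
    ((if p ∈ I ∧ q ∈ I then (1 : k) else 0) • (Submodule.subtype (kSub (k := k) I p)))
    (by
      intro x
      by_cases hq : q ∈ I
      · simp [kSub, hq]
      · have hpq : ¬ (p ∈ I ∧ q ∈ I) := fun h => hq h.2
        simp only [kSub, if_neg hq, if_neg hpq, Submodule.mem_bot]
        first
          | exact (LinearMap.smul_apply _ _ _).trans (zero_smul k _)
          | (rw [zero_smul]; rfl)
          | (erw [LinearMap.smul_apply, zero_smul]))
  φ_self p := by
    apply LinearMap.ext
    intro x
    apply Subtype.ext
    by_cases hp : p ∈ I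
    · simp [hp]
    · have hx : (x : k) = 0 := by
        have := x.2
        simp only [kSub, if_neg hp, Submodule.mem_bot] at this
        exact this
      simp [hp, hx]
  φ_comp p q r hpq hqr := by
    apply LinearMap.ext
    intro x
    apply Subtype.ext
    by_cases hp : p ∈ I
    · by_cases hr : r ∈ I
      · have hq : q ∈ I := hI hp hr hpq hqr
        simp [hp, hq, hr]
      · have h1 : ¬ (q ∈ I ∧ r ∈ I) := fun h => hr h.2
        have h2 : ¬ (p ∈ I ∧ r ∈ I) := fun h => hr h.2
        simp [h1, h2]
    · have hx : (x : k) = 0 := by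
        have := x.2
        simp only [kSub, if_neg hp, Submodule.mem_bot] at this
        exact this
      have h1 : ¬ (p ∈ I ∧ q ∈ I) := fun h => hp h.1
      have h2 : ¬ (p ∈ I ∧ r ∈ I) := fun h => hp h.1
      by_cases h3 : q ∈ I ∧ r ∈ I <;> simp [h1, h2, h3, hx]



/-! ### Auxiliary lemmas -/

namespace PersMod

lemma limToColim_apply (M : PersMod k P) (I : Set P) (p0 : P) (hp : p0 ∈ I)
    (ℓ : M.sections I) :
    M.limToColim I p0 hp ℓ =
      Submodule.Quotient.mk (DFinsupp.single (⟨p0, hp⟩ : I) (ℓ.1 ⟨p0, hp⟩)) := rfl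

lemma sections_map {M N : PersMod k P} (e : M.Iso N) {I : Set P}
    {ℓ : ∀ p : I, M.V p} (hℓ : ℓ ∈ M.sections I) :
    (fun p : I => e.e p (ℓ p)) ∈ N.sections I := by
  intro p q h
  rw [← e.comm p q h (ℓ p), hℓ p q h]

/-- Inverse of an isomorphism of persistence modules. -/
def Iso.symm {M N : PersMod k P} (e : M.Iso N) : N.Iso M where
  e p := (e.e p).symm
  comm p q h v := by
    apply (e.e q).injective
    rw [LinearEquiv.apply_symm_apply, e.comm p q h, LinearEquiv.apply_symm_apply]

lemma rkAt_congr {M N : PersMod k P} (e : M.Iso N) (I : Set P) (p0 : P) (hp : p0 ∈ I) :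
    M.rkAt I p0 hp = N.rkAt I p0 hp := by
  classical
  set emap : (Π₀ p : I, M.V p) ≃ₗ[k] (Π₀ p : I, N.V p) :=
    DFinsupp.mapRange.linearEquiv (fun p => e.e p) with hemap
  have emap_single : ∀ (p : I) (v : M.V p),
      emap (DFinsupp.single p v) = DFinsupp.single p (e.e p v) := by
    intro p v
    simp [hemap, DFinsupp.mapRange.linearEquiv, DFinsupp.mapRange_single]
    exact DFinsupp.mapRange_single (f := fun (i : I) x => e.e i x)
      (hf := fun i => map_zero (e.e i)) (i := p) (b := v)
  have hrel : (M.colimRel I).map (emap : (Π₀ p : I, M.V p) →ₗ[k] (Π₀ p : I, N.V p))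
      = N.colimRel I := by
    rw [colimRel, Submodule.map_span, colimRel]
    congr 1
    ext x
    constructor
    · rintro ⟨y, ⟨p, q, h, v, rfl⟩, rfl⟩
      refine ⟨p, q, h, e.e p v, ?_⟩
      simp only [DFinsupp.lsingle_apply, map_sub, LinearEquiv.coe_coe, emap_single, e.comm]
    · rintro ⟨p, q, h, v, rfl⟩
      refine ⟨DFinsupp.lsingle p ((e.e p).symm v)
        - DFinsupp.lsingle q (M.φ p q h ((e.e p).symm v)), ⟨p, q, h, _, rfl⟩, ?_⟩
      simp only [DFinsupp.lsingle_apply, map_sub, LinearEquiv.coe_coe, emap_single, e.comm,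
        LinearEquiv.apply_symm_apply]
  set eqv : ((Π₀ p : I, M.V p) ⧸ M.colimRel I) ≃ₗ[k] ((Π₀ p : I, N.V p) ⧸ N.colimRel I) :=
    Submodule.Quotient.equiv _ _ emap hrel with heq
  have eq_mk : ∀ x : Π₀ p : I, M.V p,
      (eqv : ((Π₀ p : I, M.V p) ⧸ M.colimRel I) →ₗ[k] ((Π₀ p : I, N.V p) ⧸ N.colimRel I))
        (Submodule.Quotient.mk x) = Submodule.Quotient.mk (emap x) := by
    intro x
    simp [heq, Submodule.Quotient.equiv_apply, Submodule.mapQ_apply]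
  have hrange : LinearMap.range (N.limToColim I p0 hp)
      = Submodule.map (eqv : _ →ₗ[k] _) (LinearMap.range (M.limToColim I p0 hp)) := by
    ext x
    simp only [LinearMap.mem_range, Submodule.mem_map]
    constructor
    · rintro ⟨ℓ, rfl⟩
      refine ⟨M.limToColim I p0 hp ⟨fun p => (e.e p).symm (ℓ.1 p),
        sections_map e.symm ℓ.2⟩, ⟨_, rfl⟩, ?_⟩
      rw [limToColim_apply, limToColim_apply, eq_mk, emap_single]
      simp
    · rintro ⟨z, ⟨ℓ, rfl⟩, rfl⟩
      refine ⟨⟨fun p => e.e p (ℓ.1 p), sections_map e ℓ.2⟩, ?_⟩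
      rw [limToColim_apply, limToColim_apply, eq_mk, emap_single]
  rw [rkAt, rkAt, hrange, LinearEquiv.finrank_map_eq]

end PersMod

section FamSum

set_option linter.unusedSectionVars false

variable {ι : Type} (J : ι → Set P) (hJ : ∀ i, IsIntervalPoset (J i))

/-- The direct sum of the interval modules. -/
noncomputable def Nmod : PersMod k P := PersMod.famSum fun i => kMod (k := k) (J i) (hJ i).1

/-- Definitional coercion for fibers of `Nmod`. -/
noncomputable def nCoe {p : P} (x : (Nmod (k := k) J hJ).V p) :
    Π₀ i, ↥(kSub (k := k) (J i) p) := x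

/-- Inverse definitional coercion for fibers of `Nmod`. -/
noncomputable def nOf {p : P} (x : Π₀ i, ↥(kSub (k := k) (J i) p)) :
    (Nmod (k := k) J hJ).V p := x

@[simp] lemma nCoe_nOf {p : P} (x : Π₀ i, ↥(kSub (k := k) (J i) p)) :
    nCoe J hJ (nOf J hJ x) = x := rfl

@[simp] lemma nOf_nCoe {p : P} (x : (Nmod (k := k) J hJ).V p) :
    nOf J hJ (nCoe J hJ x) = x := rfl

lemma nCoe_inj {p : P} {x y : (Nmod (k := k) J hJ).V p}
    (h : nCoe J hJ x = nCoe J hJ y) : x = y := h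

lemma nOf_smul {p : P} (a : k) (x : Π₀ i, ↥(kSub (k := k) (J i) p)) :
    nOf J hJ (a • x) = a • nOf J hJ x := rfl

/-- The structure map of the interval module, with transparent fiber types. -/
noncomputable def kPhi {Js : Set P} (hc : IsConvexPoset Js) {p q : P} (h : p ≤ q)
    (x : ↥(kSub (k := k) Js p)) : ↥(kSub (k := k) Js q) :=
  (kMod (k := k) Js hc).φ p q h x

lemma kPhi_val {Js : Set P} (hc : IsConvexPoset Js) {p q : P} (h : p ≤ q)
    (x : ↥(kSub (k := k) Js p)) :
    (kPhi (k := k) hc h x : k) = if p ∈ Js ∧ q ∈ Js then (x : k) else 0 := by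
  show ((if p ∈ Js ∧ q ∈ Js then (1 : k) else 0) • ((x : k))) = _
  split <;> simp

lemma kPhi_zero {Js : Set P} (hc : IsConvexPoset Js) {p q : P} (h : p ≤ q) :
    kPhi (k := k) hc h (0 : ↥(kSub (k := k) Js p)) = 0 :=
  map_zero ((kMod (k := k) Js hc).φ p q h)

lemma nCoe_φ_point {p q : P} (h : p ≤ q) (x : (Nmod (k := k) J hJ).V p) (i : ι) :
    nCoe J hJ ((Nmod (k := k) J hJ).φ p q h x) i
      = kPhi (k := k) (hJ i).1 h (nCoe J hJ x i) := rfl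

lemma nφ_single {p q : P} (h : p ≤ q) (i : ι) (v : ↥(kSub (k := k) (J i) p)) :
    (Nmod (k := k) J hJ).φ p q h (nOf J hJ (DFinsupp.single i v))
      = nOf J hJ (DFinsupp.single i (kPhi (k := k) (hJ i).1 h v)) := by
  classical
  apply nCoe_inj J hJ
  ext j
  rw [nCoe_φ_point, nCoe_nOf, nCoe_nOf]
  by_cases hij : i = j
  · subst hij
    rw [DFinsupp.single_eq_same, DFinsupp.single_eq_same]
  · rw [DFinsupp.single_eq_of_ne (Ne.symm hij), DFinsupp.single_eq_of_ne (Ne.symm hij), kPhi_zero]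

lemma kSub_val_eq_zero {Js : Set P} {p : P} (hp : p ∉ Js)
    (x : ↥(kSub (k := k) Js p)) : x = 0 := by
  apply Subtype.ext
  have := x.2
  simp only [kSub, if_neg hp, Submodule.mem_bot] at this
  exact this

/-- The canonical generator of the interval module at a point of the interval. -/
noncomputable def kOne {Js : Set P} {p : P} (hp : p ∈ Js) :
    ↥(kSub (k := k) Js p) := ⟨1, by simp [kSub, hp]⟩

lemma kSub_val_smul_one {Js : Set P} {p : P} (hp : p ∈ Js)
    (x : ↥(kSub (k := k) Js p)) : x = (x : k) • kOne (k := k) hp := by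
  apply Subtype.ext
  simp [kOne]

/-- Transport of classes in the colimit presentation along a zigzag. -/
lemma mk_single_zig (I : Set P)
    (ℓ : ∀ p : I, (Nmod (k := k) J hJ).V p)
    (hℓ : ℓ ∈ (Nmod (k := k) J hJ).sections I)
    (i : ι) {a b : P} (ha : a ∈ I)
    (h : Relation.ReflTransGen (zigStep I) a b) : ∀ (hb : b ∈ I),
    (Submodule.Quotient.mk (DFinsupp.single (⟨a, ha⟩ : I)
        (nOf J hJ (DFinsupp.single i (nCoe J hJ (ℓ ⟨a, ha⟩) i)))) :
      (Π₀ p : I, (Nmod (k := k) J hJ).V p) ⧸ (Nmod (k := k) J hJ).colimRel I)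
      = Submodule.Quotient.mk (DFinsupp.single (⟨b, hb⟩ : I)
        (nOf J hJ (DFinsupp.single i (nCoe J hJ (ℓ ⟨b, hb⟩) i)))) := by
  classical
  have key : ∀ (p q : P) (hpI : p ∈ I) (hqI : q ∈ I) (hpq : p ≤ q),
      (Submodule.Quotient.mk (DFinsupp.single (⟨p, hpI⟩ : I)
          (nOf J hJ (DFinsupp.single i (nCoe J hJ (ℓ ⟨p, hpI⟩) i)))) :
        (Π₀ p : I, (Nmod (k := k) J hJ).V p) ⧸ (Nmod (k := k) J hJ).colimRel I)
        = Submodule.Quotient.mk (DFinsupp.single (⟨q, hqI⟩ : I)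
          (nOf J hJ (DFinsupp.single i (nCoe J hJ (ℓ ⟨q, hqI⟩) i)))) := by
    intro p q hpI hqI hpq
    rw [Submodule.Quotient.eq]
    apply Submodule.subset_span
    refine ⟨⟨p, hpI⟩, ⟨q, hqI⟩, hpq,
      nOf J hJ (DFinsupp.single i (nCoe J hJ (ℓ ⟨p, hpI⟩) i)), ?_⟩
    have hstep : kPhi (k := k) (hJ i).1 hpq (nCoe J hJ (ℓ ⟨p, hpI⟩) i)
        = nCoe J hJ (ℓ ⟨q, hqI⟩) i := by
      have hs := hℓ ⟨p, hpI⟩ ⟨q, hqI⟩ hpq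
      exact congrArg (fun z => nCoe J hJ z i) hs
    have hφ : (Nmod (k := k) J hJ).φ p q hpq
          (nOf J hJ (DFinsupp.single i (nCoe J hJ (ℓ ⟨p, hpI⟩) i)))
        = nOf J hJ (DFinsupp.single i (nCoe J hJ (ℓ ⟨q, hqI⟩) i)) := by
      rw [nφ_single, hstep]
    rw [hφ]
    simp [DFinsupp.lsingle_apply]
  induction h with
  | refl => intro hb; rfl
  | @tail b c hab hbc ih =>
    intro hc
    obtain ⟨hbI, hcI, hbc'⟩ := hbc
    rw [ih hbI]
    rcases hbc' with h1 | h1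
    · exact key _ _ hbI hcI h1
    · exact (key _ _ hcI hbI h1).symm

lemma rkAt_famSum (hf : ∀ p : P, {i : ι | p ∈ J i}.Finite)
    (I : Set P) (hI : IsConnectedPoset I) (p0 : P) (h0 : p0 ∈ I) :
    (Nmod (k := k) J hJ).rkAt I p0 h0 = Nat.card {i : ι | I ⊆ J i} := by
  classical
  set q0 : I := ⟨p0, h0⟩ with hq0
  set S : Set ι := {i : ι | I ⊆ J i} with hS
  have hSfin : S.Finite := (hf p0).subset (fun i hi => hi h0)
  haveI : Fintype S := hSfin.fintype
  set L := (Nmod (k := k) J hJ).limToColim I p0 h0 with hL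
  set c : S → ((Π₀ p : I, (Nmod (k := k) J hJ).V p) ⧸ (Nmod (k := k) J hJ).colimRel I) :=
    fun i => Submodule.Quotient.mk (DFinsupp.single q0
      (nOf J hJ (DFinsupp.single i.1 (kOne (k := k) (i.2 h0))))) with hc
  have c_mem : ∀ i : S, c i ∈ LinearMap.range L := by
    intro i
    have hsec : (fun p : I => nOf J hJ (DFinsupp.single i.1 (kOne (k := k) (i.2 p.2))))
        ∈ (Nmod (k := k) J hJ).sections I := by
      intro p q h
      rw [nφ_single]
      congr 1
      apply congrArg
      apply Subtype.ext
      rw [kPhi_val]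
      simp [kOne, i.2 p.2, i.2 q.2]
    exact ⟨⟨_, hsec⟩, rfl⟩
  have Fbar : ∀ i : S,
      ∃ F : ((Π₀ p : I, (Nmod (k := k) J hJ).V p) ⧸ (Nmod (k := k) J hJ).colimRel I) →ₗ[k] k,
      ∀ j : S, F (c j) = if i = j then 1 else 0 := by
    intro i
    set g : ∀ p : I, ((Nmod (k := k) J hJ).V p →ₗ[k] k) := fun p =>
      { toFun := fun v => (nCoe J hJ v i.1 : k)
        map_add' := fun a b => by
          show ((nCoe J hJ a + nCoe J hJ b) i.1 : k) = _
          rw [DFinsupp.add_apply]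
          rfl
        map_smul' := fun a b => by
          show (((a • nCoe J hJ b) i.1 : k)) = _
          rw [DFinsupp.smul_apply]
          rfl } with hg
    have hgval : ∀ (p : I) (v : (Nmod (k := k) J hJ).V p),
        g p v = (nCoe J hJ v i.1 : k) := fun p v => rfl
    set F0 : (Π₀ p : I, (Nmod (k := k) J hJ).V p) →ₗ[k] k := DFinsupp.lsum ℕ g with hF0
    have hker : (Nmod (k := k) J hJ).colimRel I ≤ LinearMap.ker F0 := by
      rw [PersMod.colimRel, Submodule.span_le]
      rintro x ⟨p, q, h, v, rfl⟩
      simp only [SetLike.mem_coe, LinearMap.mem_ker, map_sub,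
        DFinsupp.lsingle_apply, hF0, DFinsupp.lsum_single]
      rw [hgval, hgval]
      have : (nCoe J hJ ((Nmod (k := k) J hJ).φ p q h v) i.1 : k)
          = (nCoe J hJ v i.1 : k) := by
        rw [nCoe_φ_point, kPhi_val, if_pos ⟨i.2 p.2, i.2 q.2⟩]
      rw [this, sub_self]
    refine ⟨((Nmod (k := k) J hJ).colimRel I).liftQ F0 hker, ?_⟩
    intro j
    rw [hc]
    rw [Submodule.liftQ_apply, hF0, DFinsupp.lsum_single, hgval, nCoe_nOf]
    by_cases hij : i = j
    · subst hij
      simp [DFinsupp.single_eq_same, kOne]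
    · have hne : j.1 ≠ i.1 := fun hh => hij (Subtype.ext hh.symm)
      rw [DFinsupp.single_eq_of_ne hne.symm]
      simp [hij]
  have hli : LinearIndependent k c := by
    rw [linearIndependent_iff']
    intro s g hsum i hi
    obtain ⟨F, hF⟩ := Fbar i
    have hz := congrArg F hsum
    rw [map_sum, map_zero] at hz
    simp only [map_smul, hF, smul_eq_mul, mul_ite, mul_one, mul_zero] at hz
    rwa [Finset.sum_ite_eq s i (fun j => g j), if_pos hi] at hz
  have hrange : LinearMap.range L = Submodule.span k (Set.range c) := by
    apply le_antisymm
    · rintro x ⟨ℓ, rfl⟩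
      have hdec : L ℓ = ∑ i ∈ (nCoe J hJ (ℓ.1 q0)).support,
          Submodule.Quotient.mk (DFinsupp.single q0
            (nOf J hJ (DFinsupp.single i (nCoe J hJ (ℓ.1 q0) i)))) := by
        have hsum : ℓ.1 q0 = ∑ i ∈ (nCoe J hJ (ℓ.1 q0)).support,
            nOf J hJ (DFinsupp.single i (nCoe J hJ (ℓ.1 q0) i)) :=
          congrArg (fun z => nOf J hJ z)
            (DFinsupp.sum_single (f := nCoe J hJ (ℓ.1 q0))).symm
        have h5 := congrArg (fun z => (Submodule.mkQ ((Nmod (k := k) J hJ).colimRel I) ∘ₗ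
            DFinsupp.lsingle (R := k) (q0 : I)) z) hsum
        have h6 := map_sum (Submodule.mkQ ((Nmod (k := k) J hJ).colimRel I) ∘ₗ
            DFinsupp.lsingle (R := k) (q0 : I))
            (fun i => nOf J hJ (DFinsupp.single i (nCoe J hJ (ℓ.1 q0) i)))
            (nCoe J hJ (ℓ.1 q0)).support
        exact h5.trans h6
      rw [hdec]
      apply Submodule.sum_mem
      intro i _
      by_cases hiS : i ∈ S
      · have h1 : nCoe J hJ (ℓ.1 q0) i
            = ((nCoe J hJ (ℓ.1 q0) i : k)) • kOne (k := k) (hiS h0) :=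
          kSub_val_smul_one _ _
        rw [h1, DFinsupp.single_smul, nOf_smul, DFinsupp.single_smul,
          Submodule.Quotient.mk_smul]
        exact Submodule.smul_mem _ _ (Submodule.subset_span ⟨⟨i, hiS⟩, rfl⟩)
      · obtain ⟨p, hpI, hpJ⟩ := Set.not_subset.1 hiS
        have hzig := hI.2 p0 h0 p hpI
        have hmk := mk_single_zig (k := k) J hJ I ℓ.1 ℓ.2 i h0 hzig hpI
        rw [hmk, kSub_val_eq_zero hpJ (nCoe J hJ (ℓ.1 ⟨p, hpI⟩) i), DFinsupp.single_zero,
          show nOf J hJ (0 : Π₀ j, ↥(kSub (k := k) (J j) p)) = 0 from rfl,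
          DFinsupp.single_zero]
        simp
    · rw [Submodule.span_le]
      rintro x ⟨i, rfl⟩
      exact c_mem i
  rw [PersMod.rkAt, ← hL, hrange, finrank_span_eq_card hli, Nat.card_eq_fintype_card]

end FamSum

/-- For an interval-decomposable module `M` and a connected subposet `I`, the generalized rank
`rk_M(I)` equals the total multiplicity of intervals `J` in the barcode of `M` with `J ⊇ I`. -/
theorem rank_eq_total_multiplicity
    (M : PersMod k P) {ι : Type} (J : ι → Set P)
    (hJ : ∀ i, IsIntervalPoset (J i)) (hf : ∀ p : P, {i : ι | p ∈ J i}.Finite)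
    (hiso : Nonempty (M.Iso (PersMod.famSum fun i => kMod (J i) (hJ i).1)))
    (I : Set P) (hI : IsConnectedPoset I) :
    ∀ (p0 : P) (h0 : p0 ∈ I), M.rkAt I p0 h0 = Nat.card {i : ι | I ⊆ J i} := by
  intro p0 h0
  obtain ⟨e⟩ := hiso
  rw [PersMod.rkAt_congr e I p0 h0]
  exact rkAt_famSum J hJ hf I hI p0 h0
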